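/- Let d ≤ e and n be positive natural numbers, let 𝒜 be a symmetric d-way tensor of dimension n over ℝ. Then there exists a symmetric e-way tensor ℬ of dimension n over ℝ such that for every i : Fin d → Fin n, ℬ applied to the index that equals i on the first d positions and equals 0 (the first index value) on the remaining e − d positions equals 𝒜(i). -/

import Mathlib

/-!
A symmetric function of `d` entries depends only on the multiset of its entries, so it descends
to multisets. The extension takes an `e`-tuple to the value of that descended function on its
multiset of entries with `e - d` copies of `0` removed; padding `i` by zeros adds exactly these
copies back.
-/

open List

lemma Tuple.comp_sort_eq_of_perm {m : ℕ} {α : Type*} [LinearOrder α] {f g : Fin m → α}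
    (h : ofFn f ~ ofFn g) : f ∘ Tuple.sort f = g ∘ Tuple.sort g :=
  ofFn_injective <| Perm.eq_of_sortedLE (Tuple.monotone_sort f).sortedLE_ofFn
    (Tuple.monotone_sort g).sortedLE_ofFn <|
      ((Tuple.sort f).ofFn_comp_perm f).trans (h.trans ((Tuple.sort g).ofFn_comp_perm g).symm)

section Symmetric

variable {m : ℕ} {α β : Type*} [LinearOrder α] {A : (Fin m → α) → β}

lemma eq_of_ofFn_perm (hA : ∀ (σ : Equiv.Perm (Fin m)) (i : Fin m → α), A (i ∘ σ) = A i)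
    {f g : Fin m → α} (h : ofFn f ~ ofFn g) : A f = A g := by
  rw [← hA (Tuple.sort f) f, ← hA (Tuple.sort g) g, Tuple.comp_sort_eq_of_perm h]

lemma exists_multiset_factorization [Nonempty β]
    (hA : ∀ (σ : Equiv.Perm (Fin m)) (i : Fin m → α), A (i ∘ σ) = A i) :
    ∃ A' : Multiset α → β, ∀ f : Fin m → α, A' (ofFn f) = A f := by
  classical
  refine ⟨fun s => if h : ∃ f : Fin m → α, (ofFn f : Multiset α) = s then A h.choose
    else Classical.arbitrary β, fun f => ?_⟩
  have hf : ∃ g : Fin m → α, (ofFn g : Multiset α) = ofFn f := ⟨f, rfl⟩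
  dsimp only
  rw [dif_pos hf]
  exact eq_of_ofFn_perm hA (Multiset.coe_eq_coe.1 hf.choose_spec)

end Symmetric

lemma ofFn_dite_lt_eq_append_replicate {α : Type*} {d e : ℕ} (hde : d ≤ e) (i : Fin d → α)
    (a : α) :
    ofFn (fun j : Fin e => if h : (j : ℕ) < d then i ⟨j, h⟩ else a)
      = ofFn i ++ replicate (e - d) a := by
  refine ext_getElem (by simp [Nat.add_sub_cancel' hde]) fun k _ _ => ?_
  rw [List.getElem_ofFn]
  rcases lt_or_ge k d with hk | hk
  · rw [getElem_append_left (by simpa using hk)]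
    simp [hk]
  · rw [getElem_append_right (by simpa using hk)]
    simp [Nat.not_lt.mpr hk]

theorem symmetric_tensor_embedding_general (d e n : ℕ) (hn : 0 < n) (hde : d ≤ e)
    (A : (Fin d → Fin n) → ℝ)
    (hA : ∀ (σ : Equiv.Perm (Fin d)) (i : Fin d → Fin n), A (i ∘ σ) = A i) :
    ∃ B : (Fin e → Fin n) → ℝ,
      (∀ (σ : Equiv.Perm (Fin e)) (j : Fin e → Fin n), B (j ∘ σ) = B j) ∧
      ∀ i : Fin d → Fin n,
        B (fun j : Fin e => if h : (j : ℕ) < d then i ⟨j, h⟩ else ⟨0, hn⟩) = A i := by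
  obtain ⟨A', hA'⟩ := exists_multiset_factorization hA
  refine ⟨fun j => A' ((ofFn j : Multiset (Fin n)) - Multiset.replicate (e - d) ⟨0, hn⟩),
    fun σ j => ?_, fun i => ?_⟩
  · dsimp only
    rw [Multiset.coe_eq_coe.2 (σ.ofFn_comp_perm j)]
  · dsimp only
    rw [ofFn_dite_lt_eq_append_replicate hde, ← Multiset.coe_add, Multiset.coe_replicate,
      Multiset.add_sub_cancel_right, hA']

/-- Any symmetric `d`-way tensor can be embedded into a symmetric `e`-way tensor
(`d ≤ e`) whose value on an index equal to `i` on the first `d` positions and to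
`0` on the remaining positions equals the value of the original tensor at `i`. -/
theorem symmetric_tensor_embedding (d e n : ℕ) (hd : 0 < d) (hn : 0 < n) (hde : d ≤ e)
    (A : (Fin d → Fin n) → ℝ)
    (hA : ∀ (σ : Equiv.Perm (Fin d)) (i : Fin d → Fin n), A (i ∘ σ) = A i) :
    ∃ B : (Fin e → Fin n) → ℝ,
      (∀ (σ : Equiv.Perm (Fin e)) (j : Fin e → Fin n), B (j ∘ σ) = B j) ∧
      ∀ i : Fin d → Fin n,
        B (fun j : Fin e => if h : (j : ℕ) < d then i ⟨j, h⟩ else ⟨0, hn⟩) = A i :=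
  symmetric_tensor_embedding_general d e n hn hde A hA
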